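/- Let U ⊆ ℂ² be open and λ : U → ℂ smooth satisfying the integrability equation ∂λ/∂x̄ + conj(λ)·∂λ/∂ȳ = 0. Set b := ∂λ/∂ȳ, ∂_F f := ∂f/∂x + λ·∂f/∂y, and ∂̄_F f := ∂f/∂x̄ + conj(λ)·∂f/∂ȳ. Then on the open set V = {p ∈ U : b(p) ≠ 0} one has ∂_F(∂̄_F b / b) = |b|². (Equivalently, writing β = log b locally, Δ_F β₁ = exp(2β₁) and Δ_F β₂ = 0 for the real and imaginary parts of β; this is the statement that the leafwise metric |b|²|dx|² has curvature −4.) -/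

import Mathlib

open Complex ComplexConjugate

/-- Wirtinger derivative `∂f/∂x` of `f : ℂ² → ℂ`, via the real Fréchet derivative. -/
noncomputable def wdx (f : ℂ × ℂ → ℂ) (p : ℂ × ℂ) : ℂ :=
  (1 / 2 : ℂ) * (fderiv ℝ f p (1, 0) - Complex.I * fderiv ℝ f p (Complex.I, 0))

/-- Wirtinger derivative `∂f/∂x̄`. -/
noncomputable def wdxbar (f : ℂ × ℂ → ℂ) (p : ℂ × ℂ) : ℂ :=
  (1 / 2 : ℂ) * (fderiv ℝ f p (1, 0) + Complex.I * fderiv ℝ f p (Complex.I, 0))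

/-- Wirtinger derivative `∂f/∂y`. -/
noncomputable def wdy (f : ℂ × ℂ → ℂ) (p : ℂ × ℂ) : ℂ :=
  (1 / 2 : ℂ) * (fderiv ℝ f p (0, 1) - Complex.I * fderiv ℝ f p (0, Complex.I))

/-- Wirtinger derivative `∂f/∂ȳ`. -/
noncomputable def wdybar (f : ℂ × ℂ → ℂ) (p : ℂ × ℂ) : ℂ :=
  (1 / 2 : ℂ) * (fderiv ℝ f p (0, 1) + Complex.I * fderiv ℝ f p (0, Complex.I))

/-- The leafwise operator `∂_F f = ∂f/∂x + λ·∂f/∂y`. -/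
noncomputable def dF (lam f : ℂ × ℂ → ℂ) (p : ℂ × ℂ) : ℂ :=
  wdx f p + lam p * wdy f p

/-- The leafwise operator `∂̄_F f = ∂f/∂x̄ + conj(λ)·∂f/∂ȳ`. -/
noncomputable def dFbar (lam f : ℂ × ℂ → ℂ) (p : ℂ × ℂ) : ℂ :=
  wdxbar f p + conj (lam p) * wdybar f p



noncomputable def wd (v w : ℂ × ℂ) (s : ℂ) (f : ℂ × ℂ → ℂ) (p : ℂ × ℂ) : ℂ :=
  (1 / 2 : ℂ) * (fderiv ℝ f p v + s * fderiv ℝ f p w)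

lemma hasFDerivAt_conj' {f : ℂ × ℂ → ℂ} {f' : ℂ × ℂ →L[ℝ] ℂ} {p : ℂ × ℂ}
    (hf : HasFDerivAt f f' p) :
    HasFDerivAt (fun q => conj (f q))
      ((Complex.conjCLE.toContinuousLinearMap).comp f') p :=
  (Complex.conjCLE.toContinuousLinearMap.hasFDerivAt).comp p hf

lemma differentiableAt_conj'' {f : ℂ × ℂ → ℂ} {p : ℂ × ℂ} (hf : DifferentiableAt ℝ f p) :
    DifferentiableAt ℝ (fun q => conj (f q)) p :=
  (hasFDerivAt_conj' hf.hasFDerivAt).differentiableAt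

lemma fderiv_conj_eq {f : ℂ × ℂ → ℂ} {p : ℂ × ℂ} (hf : DifferentiableAt ℝ f p) (u : ℂ × ℂ) :
    fderiv ℝ (fun q => conj (f q)) p u = conj (fderiv ℝ f p u) := by
  rw [(hasFDerivAt_conj' hf.hasFDerivAt).fderiv]
  simp

lemma wd_congr {f g : ℂ × ℂ → ℂ} {p : ℂ × ℂ} (h : f =ᶠ[nhds p] g) (v w : ℂ × ℂ) (s : ℂ) :
    wd v w s f p = wd v w s g p := by
  unfold wd; rw [h.fderiv_eq]

lemma wd_add {f g : ℂ × ℂ → ℂ} {p : ℂ × ℂ} (hf : DifferentiableAt ℝ f p)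
    (hg : DifferentiableAt ℝ g p) (v w : ℂ × ℂ) (s : ℂ) :
    wd v w s (fun q => f q + g q) p = wd v w s f p + wd v w s g p := by
  unfold wd; rw [fderiv_fun_add hf hg]
  simp only [ContinuousLinearMap.add_apply]; ring

lemma wd_mul {f g : ℂ × ℂ → ℂ} {p : ℂ × ℂ} (hf : DifferentiableAt ℝ f p)
    (hg : DifferentiableAt ℝ g p) (v w : ℂ × ℂ) (s : ℂ) :
    wd v w s (fun q => f q * g q) p = wd v w s f p * g p + f p * wd v w s g p := by
  unfold wd; rw [fderiv_fun_mul hf hg]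
  simp only [ContinuousLinearMap.add_apply, ContinuousLinearMap.smul_apply, smul_eq_mul]; ring

lemma wd_neg {f : ℂ × ℂ → ℂ} {p : ℂ × ℂ} (v w : ℂ × ℂ) (s : ℂ) :
    wd v w s (fun q => -f q) p = - wd v w s f p := by
  unfold wd; rw [fderiv_fun_neg]
  simp only [ContinuousLinearMap.neg_apply]; ring

lemma wd_conj {f : ℂ × ℂ → ℂ} {p : ℂ × ℂ} (hf : DifferentiableAt ℝ f p) (v w : ℂ × ℂ) (s : ℂ) :
    wd v w s (fun q => conj (f q)) p = conj (wd v w (conj s) f p) := by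
  unfold wd
  rw [fderiv_conj_eq hf, fderiv_conj_eq hf, map_mul, map_add, map_mul, conj_conj,
    map_div₀, map_one, map_ofNat]

lemma differentiableAt_wd {f : ℂ × ℂ → ℂ} {p : ℂ × ℂ}
    (h : DifferentiableAt ℝ (fderiv ℝ f) p) (v w : ℂ × ℂ) (s : ℂ) :
    DifferentiableAt ℝ (fun q => wd v w s f q) p := by
  unfold wd
  exact (((h.clm_apply (differentiableAt_const v)).add
    ((h.clm_apply (differentiableAt_const w)).const_mul s)).const_mul _)

lemma fderiv_wd_apply {f : ℂ × ℂ → ℂ} {p : ℂ × ℂ}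
    (h : DifferentiableAt ℝ (fderiv ℝ f) p) (v w : ℂ × ℂ) (s : ℂ) (u : ℂ × ℂ) :
    fderiv ℝ (fun q => wd v w s f q) p u
      = (1 / 2 : ℂ) * (fderiv ℝ (fderiv ℝ f) p u v + s * fderiv ℝ (fderiv ℝ f) p u w) := by
  have h1 : DifferentiableAt ℝ (fun q => fderiv ℝ f q v) p := h.clm_apply (differentiableAt_const v)
  have h2 : DifferentiableAt ℝ (fun q => fderiv ℝ f q w) p := h.clm_apply (differentiableAt_const w)
  have e1 : ∀ z : ℂ × ℂ, fderiv ℝ (fun q => fderiv ℝ f q z) p u = fderiv ℝ (fderiv ℝ f) p u z := by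
    intro z
    rw [fderiv_clm_apply h (differentiableAt_const z)]
    simp
  unfold wd
  rw [fderiv_const_mul (h1.fun_add (h2.const_mul s)), fderiv_fun_add h1 (h2.const_mul s),
    fderiv_const_mul h2]
  simp only [ContinuousLinearMap.smul_apply, ContinuousLinearMap.add_apply, smul_eq_mul, e1]

lemma wd_wd {f : ℂ × ℂ → ℂ} {p : ℂ × ℂ} (h : DifferentiableAt ℝ (fderiv ℝ f) p)
    (v w v' w' : ℂ × ℂ) (s s' : ℂ) :
    wd v w s (fun q => wd v' w' s' f q) p
      = (1 / 4 : ℂ) * (fderiv ℝ (fderiv ℝ f) p v v' + s' * fderiv ℝ (fderiv ℝ f) p v w'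
          + s * fderiv ℝ (fderiv ℝ f) p w v' + s * s' * fderiv ℝ (fderiv ℝ f) p w w') := by
  show (1 / 2 : ℂ) * (fderiv ℝ (fun q => wd v' w' s' f q) p v
      + s * fderiv ℝ (fun q => wd v' w' s' f q) p w) = _
  rw [fderiv_wd_apply h v' w' s' v, fderiv_wd_apply h v' w' s' w]
  ring

lemma wd_comm {f : ℂ × ℂ → ℂ} {p : ℂ × ℂ} (h : DifferentiableAt ℝ (fderiv ℝ f) p)
    (hs : ∀ a c, fderiv ℝ (fderiv ℝ f) p a c = fderiv ℝ (fderiv ℝ f) p c a)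
    (v w v' w' : ℂ × ℂ) (s s' : ℂ) :
    wd v w s (fun q => wd v' w' s' f q) p = wd v' w' s' (fun q => wd v w s f q) p := by
  rw [wd_wd h, wd_wd h]
  linear_combination (1/4 : ℂ) * hs v v' + (s'/4) * hs v w' + (s/4) * hs w v'
    + (s*s'/4) * hs w w'

lemma hwdx : ∀ (g : ℂ × ℂ → ℂ) (q : ℂ × ℂ), wdx g q = wd (1,0) (Complex.I,0) (-Complex.I) g q := by
  intro g q; unfold wdx wd; ring

lemma hwdy : ∀ (g : ℂ × ℂ → ℂ) (q : ℂ × ℂ), wdy g q = wd (0,1) (0,Complex.I) (-Complex.I) g q := by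
  intro g q; unfold wdy wd; ring

lemma hwdxbar : ∀ (g : ℂ × ℂ → ℂ) (q : ℂ × ℂ), wdxbar g q = wd (1,0) (Complex.I,0) Complex.I g q :=
  fun _ _ => rfl

lemma hwdybar : ∀ (g : ℂ × ℂ → ℂ) (q : ℂ × ℂ), wdybar g q = wd (0,1) (0,Complex.I) Complex.I g q :=
  fun _ _ => rfl


/-- For a smooth slope `λ` satisfying the integrability equation, with `b = ∂λ/∂ȳ`,
one has `∂_F(∂̄_F b / b) = |b|²` on the set where `b ≠ 0` (the leafwise metric
`|b|²|dx|²` has curvature −4). -/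
theorem stmt8 (U : Set (ℂ × ℂ)) (hU : IsOpen U)
    (lam : ℂ × ℂ → ℂ)
    (hsm : ContDiffOn ℝ (⊤ : ℕ∞) lam U)
    (hint : ∀ p ∈ U, wdxbar lam p + conj (lam p) * wdybar lam p = 0)
    (b : ℂ × ℂ → ℂ)
    (hb : ∀ p : ℂ × ℂ, b p = wdybar lam p) :
    ∀ p ∈ U, b p ≠ 0 →
      dF lam (fun q => dFbar lam b q / b q) p = ((‖b p‖ : ℝ) : ℂ) ^ 2 := by

  intro p hp hbp
  have hdl : ∀ q ∈ U, DifferentiableAt ℝ lam q := fun q hq =>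
    (hsm.contDiffAt (hU.mem_nhds hq)).differentiableAt (by simp)
  have hfd2 : ContDiffOn ℝ 2 (fderiv ℝ lam) U := hsm.fderiv_of_isOpen hU (WithTop.coe_le_coe.mpr le_top)
  have hdS : ∀ q ∈ U, DifferentiableAt ℝ (fderiv ℝ lam) q := fun q hq =>
    (hfd2.contDiffAt (hU.mem_nhds hq)).differentiableAt two_ne_zero
  have hsymm : ∀ q ∈ U, ∀ a c, fderiv ℝ (fderiv ℝ lam) q a c = fderiv ℝ (fderiv ℝ lam) q c a :=
    fun q hq a c => (hsm.contDiffAt (hU.mem_nhds hq)).isSymmSndFDerivAt (by rw [minSmoothness_of_isRCLikeNormedField]; exact WithTop.coe_le_coe.mpr le_top) a c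
  have hbB : b = fun r => wd (0,1) (0,Complex.I) Complex.I lam r := funext fun r => hb r
  have key : ∀ q ∈ U, ∀ (v w : ℂ × ℂ) (s : ℂ),
      wd v w s (fun r => wd (1,0) (Complex.I,0) Complex.I lam r) q
        + conj (wd v w (conj s) lam q) * wd (0,1) (0,Complex.I) Complex.I lam q
        + conj (lam q) * wd v w s (fun r => wd (0,1) (0,Complex.I) Complex.I lam r) q = 0 := by
    intro q hq v w s
    have d2 : DifferentiableAt ℝ (fun r => conj (lam r)) q := differentiableAt_conj'' (hdl q hq)
    have dA : DifferentiableAt ℝ (fun r => wd (1,0) (Complex.I,0) Complex.I lam r) q :=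
      differentiableAt_wd (hdS q hq) _ _ _
    have dB : DifferentiableAt ℝ (fun r => wd (0,1) (0,Complex.I) Complex.I lam r) q :=
      differentiableAt_wd (hdS q hq) _ _ _
    have h0 : (fun r => wd (1,0) (Complex.I,0) Complex.I lam r
        + conj (lam r) * wd (0,1) (0,Complex.I) Complex.I lam r) =ᶠ[nhds q] (fun _ => (0:ℂ)) := by
      filter_upwards [hU.mem_nhds hq] with r hr
      exact hint r hr
    have hz : wd v w s (fun r => wd (1,0) (Complex.I,0) Complex.I lam r
        + conj (lam r) * wd (0,1) (0,Complex.I) Complex.I lam r) q = 0 := by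
      rw [wd_congr h0]
      unfold wd
      simp
    rw [wd_add dA (d2.fun_mul dB), wd_mul d2 dB, wd_conj (hdl q hq)] at hz
    linear_combination hz
  have key1 : ∀ q ∈ U, dFbar lam b q
      = -conj (wd (0,1) (0,Complex.I) (-Complex.I) lam q) * b q := by
    intro q hq
    have hk := key q hq (0,1) (0,Complex.I) Complex.I
    rw [Complex.conj_I] at hk
    have hc := wd_comm (hdS q hq) (hsymm q hq) (0,1) (0,Complex.I) (1,0) (Complex.I,0)
      Complex.I Complex.I
    unfold dFbar
    rw [hbB, hwdxbar, hwdybar]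
    linear_combination hk - hc
  have hk2 := key p hp (0,1) (0,Complex.I) (-Complex.I)
  rw [show conj (-Complex.I) = Complex.I by simp] at hk2
  have dBp : DifferentiableAt ℝ (fun r => wd (0,1) (0,Complex.I) Complex.I lam r) p :=
    differentiableAt_wd (hdS p hp) _ _ _
  have hbcont : ContinuousAt b p := by rw [hbB]; exact dBp.continuousAt
  have hbne : ∀ᶠ q in nhds p, b q ≠ 0 := hbcont.eventually_ne hbp
  have heq : (fun q => dFbar lam b q / b q) =ᶠ[nhds p]
      (fun q => -conj (wd (0,1) (0,Complex.I) (-Complex.I) lam q)) := by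
    filter_upwards [hU.mem_nhds hp, hbne] with q hq hbq
    rw [key1 q hq]
    exact mul_div_cancel_right₀ _ hbq
  have hfe : fderiv ℝ (fun q => dFbar lam b q / b q) p
      = fderiv ℝ (fun q => -conj (wd (0,1) (0,Complex.I) (-Complex.I) lam q)) p := heq.fderiv_eq
  have hdF : dF lam (fun q => dFbar lam b q / b q) p
      = dF lam (fun q => -conj (wd (0,1) (0,Complex.I) (-Complex.I) lam q)) p := by
    unfold dF wdx wdy
    rw [hfe]
  have dCp : DifferentiableAt ℝ (fun q => wd (0,1) (0,Complex.I) (-Complex.I) lam q) p :=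
    differentiableAt_wd (hdS p hp) _ _ _
  have step3 : dF lam (fun q => -conj (wd (0,1) (0,Complex.I) (-Complex.I) lam q)) p
      = b p * conj (b p) := by
    unfold dF
    rw [hwdx, hwdy, wd_neg, wd_neg, wd_conj dCp, wd_conj dCp,
      show conj (-Complex.I) = Complex.I by simp]
    have hc1 := wd_comm (hdS p hp) (hsymm p hp) (1,0) (Complex.I,0) (0,1) (0,Complex.I)
      Complex.I (-Complex.I)
    have hc2 := wd_comm (hdS p hp) (hsymm p hp) (0,1) (0,Complex.I) (0,1) (0,Complex.I)
      Complex.I (-Complex.I)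
    rw [hbB]
    have hconj := congrArg conj hk2
    simp only [map_add, map_mul, map_zero, conj_conj] at hconj
    have cc1 := congrArg conj hc1
    have cc2 := congrArg conj hc2
    linear_combination -hconj - cc1 - lam p * cc2
  rw [hdF, step3, Complex.mul_conj, ← Complex.sq_norm]
  push_cast
  ring
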